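/- arXiv:1606.09216 — 3 statements merged into one kernel-verified Lean document; each statement's English description precedes it below -/
import Mathlib

section
/- Let p ∈ L²(0,T;Q) with ∂ₜp ∈ L²(0,T;Q') solve the parabolic equation ⟨∂ₜp(t), q⟩ + b(p(t), q) = (f, q)_H for all q ∈ Q, and let p̃ ∈ L²(0,T;Q̃) with ∂ₜp̃ ∈ L²(0,T;Q̃) solve the Galerkin-projected problem (∂ₜp̃(t), q̃)_H + b(p̃(t), q̃) = (f, q̃)_H for all q̃ ∈ Q̃. Set e(t) := p(t) − p̃(t) and ρ(t) := p(t) − E(p̃(t)), where E is the elliptic reconstruction. Then for almost every t and all q ∈ Q, the error identity ⟨∂ₜe(t), q⟩ + b(ρ(t), q) = 0 holds. -/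
open RealInnerProductSpace MeasureTheory

/-- Error identity. If `p` solves the parabolic problem and `pt` its
`Q̃`-Galerkin semi-discretization, then with `e = p - pt` and
`ρ(t) = p(t) - E (pt t)` (elliptic reconstruction `E`), for a.e. `t ∈ (0,T]` and
all `q ∈ Q`: `⟪∂ₜe(t), q⟫ + b (ρ t) q = 0`. -/
theorem parabolic_error_identity
    {H : Type*} [NormedAddCommGroup H] [InnerProductSpace ℝ H]
    (Q Qt : Submodule ℝ H)
    (hdense : Dense (Q : Set H))
    (hfin : FiniteDimensional ℝ Qt)
    (b : H →ₗ[ℝ] H →ₗ[ℝ] ℝ)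
    (hcont : ∃ M : ℝ, ∀ p ∈ Q, ∀ q ∈ Q, |b p q| ≤ M * ‖p‖ * ‖q‖)
    (hcoer : ∃ c : ℝ, 0 < c ∧ ∀ q ∈ Q, c * ‖q‖ ^ 2 ≤ b q q)
    (f : H) (T : ℝ) (hT : 0 < T)
    -- elliptic reconstruction data
    (proj : H → H) (hprojMem : ∀ v : H, proj v ∈ Qt)
    (hprojOrth : ∀ v : H, ∀ qr' ∈ Qt, ⟪v - proj v, qr'⟫ = 0)
    (B : H → H) (hBmem : ∀ qr ∈ Qt, B qr ∈ Qt)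
    (hBriesz : ∀ qr ∈ Qt, ∀ qr' ∈ Qt, ⟪B qr, qr'⟫ = b qr qr')
    (E : H → H) (hEmem : ∀ qr ∈ Qt, E qr ∈ Q)
    (hE : ∀ qr ∈ Qt, ∀ q' ∈ Q, b (E qr) q' = ⟪B qr - proj f + f, q'⟫)
    -- the true solution `p` with time derivative `dp`
    (p dp : ℝ → H) (hpQ : ∀ t, p t ∈ Q)
    (hp : ∀ᵐ t ∂(volume.restrict (Set.Ioc 0 T)),
      ∀ q ∈ Q, ⟪dp t, q⟫ + b (p t) q = ⟪f, q⟫)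
    -- the Galerkin approximation `pt` with time derivative `dpt`
    (pt dpt : ℝ → H) (hptQt : ∀ t, pt t ∈ Qt) (hdptQt : ∀ t, dpt t ∈ Qt)
    (hpt : ∀ᵐ t ∂(volume.restrict (Set.Ioc 0 T)),
      ∀ qr ∈ Qt, ⟪dpt t, qr⟫ + b (pt t) qr = ⟪f, qr⟫) :
    ∀ᵐ t ∂(volume.restrict (Set.Ioc 0 T)),
      ∀ q ∈ Q, ⟪dp t - dpt t, q⟫ + b (p t - E (pt t)) q = 0 := by
  filter_upwards [hp, hpt] with t h1 h2
  intro q hq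
  -- key: v := dpt t + B (pt t) - proj f is zero
  set v : H := dpt t + B (pt t) - proj f with hv
  have hvmem : v ∈ Qt := Submodule.sub_mem _ (Submodule.add_mem _ (hdptQt t)
    (hBmem _ (hptQt t))) (hprojMem f)
  have hvz : ∀ qr ∈ Qt, ⟪v, qr⟫ = 0 := by
    intro qr hqr
    have e1 := h2 qr hqr
    have e2 := hBriesz (pt t) (hptQt t) qr hqr
    have e3 := hprojOrth f qr hqr
    rw [inner_sub_left] at e3
    simp only [hv, inner_sub_left, inner_add_left]
    linarith
  have hv0 : v = 0 := by
    have := hvz v hvmem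
    rwa [inner_self_eq_zero] at this
  have e1 := h1 q hq
  have e4 := hE (pt t) (hptQt t) q hq
  have e5 : ⟪v, q⟫ = 0 := by rw [hv0]; simp
  rw [hv, inner_sub_left, inner_add_left] at e5
  rw [inner_add_left, inner_sub_left] at e4
  rw [map_sub, LinearMap.sub_apply, e4, inner_sub_left]
  linarith
end

section
/- In the abstract parabolic setting with conforming/non-conforming splitting p̃(t) = p̃ᶜ(t) + p̃ᵈ(t), p̃ᶜ(t) ∈ Q, the differential inequality ∂ₜ‖eᶜ(t)‖² + |||ρ(t)|||² ≤ 3 |||∂ₜ p̃ᵈ(t)|||²_{Q,−1} + (2|||b|||² + 1)·|||εᶜ(t)|||² holds, where eᶜ = p − p̃ᶜ, ρ = p − E(p̃), εᶜ = E(p̃) − p̃ᶜ, |||·||| is the energy norm equal to the square root of the symmetric part of b on Q, |||b||| is the continuity constant of b on Q with respect to |||·|||, and |||·|||_{Q,−1} is the corresponding dual norm. -/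
open RealInnerProductSpace

/-- The differential inequality
`∂ₜ‖eᶜ(t)‖² + |||ρ(t)|||² ≤ 3 |||∂ₜ p̃ᵈ(t)|||²_{Q,-1} + (2|||b|||² + 1)·|||εᶜ(t)|||²`,
where `eᶜ = p - p̃ᶜ`, `ρ = p - E(p̃)`, `εᶜ = E(p̃) - p̃ᶜ`, `en` is the energy norm
(square root of the symmetric part of `b` on `Q`), `Cb` the continuity constant of
`b` w.r.t. `en`, and `dnorm` the corresponding dual norm. -/
theorem differential_inequality_semidiscrete
    {H : Type*} [NormedAddCommGroup H] [InnerProductSpace ℝ H]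
    (Q Qt : Submodule ℝ H)
    (b : H →ₗ[ℝ] H →ₗ[ℝ] ℝ)
    -- energy norm: square root of the symmetric part of `b` on `Q`
    (en : H → ℝ) (hen_nonneg : ∀ v, 0 ≤ en v)
    (hen : ∀ q ∈ Q, en q ^ 2 = b q q)
    -- continuity constant of `b` on `Q` w.r.t. the energy norm
    (Cb : ℝ) (hCb : ∀ p ∈ Q, ∀ q ∈ Q, |b p q| ≤ Cb * en p * en q)
    -- dual norm `|||·|||_{Q,-1}`
    (dnorm : H → ℝ) (hdnorm_nonneg : ∀ g, 0 ≤ dnorm g)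
    (hdnorm : ∀ g : H, ∀ q ∈ Q, ⟪g, q⟫ ≤ dnorm g * en q)
    -- elliptic reconstruction
    (E : H → H) (hEmem : ∀ qr ∈ Qt, E qr ∈ Q)
    -- solution, approximation and its conforming/nonconforming splitting
    (p pt ptc ptd : ℝ → H)
    (hpQ : ∀ t, p t ∈ Q) (hptQt : ∀ t, pt t ∈ Qt) (hptcQ : ∀ t, ptc t ∈ Q)
    (hsplit : ∀ t, pt t = ptc t + ptd t)
    -- time derivatives at the fixed time `t`
    (t : ℝ) (dp dpt dptc dptd : H)
    (hdp : HasDerivAt p dp t) (hdpt : HasDerivAt pt dpt t)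
    (hdptc : HasDerivAt ptc dptc t) (hdptd : HasDerivAt ptd dptd t)
    -- derivative of `‖eᶜ‖²` at `t`
    (D : ℝ) (hD : HasDerivAt (fun s => ‖p s - ptc s‖ ^ 2) D t)
    -- error identity at `t`
    (herr : ∀ q ∈ Q, ⟪dp - dpt, q⟫ + b (p t - E (pt t)) q = 0) :
    D + en (p t - E (pt t)) ^ 2
      ≤ 3 * dnorm dptd ^ 2 + (2 * Cb ^ 2 + 1) * en (E (pt t) - ptc t) ^ 2 := by
  have hEQ : E (pt t) ∈ Q := hEmem _ (hptQt t)
  set ρ := p t - E (pt t) with hρ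
  set ε := E (pt t) - ptc t with hε
  have hρQ : ρ ∈ Q := Q.sub_mem (hpQ t) hEQ
  have hεQ : ε ∈ Q := Q.sub_mem hEQ (hptcQ t)
  have he : p t - ptc t = ρ + ε := by rw [hρ, hε]; abel
  have heQ : p t - ptc t ∈ Q := Q.sub_mem (hpQ t) (hptcQ t)
  -- derivative of the split
  have hptfun : pt = fun s => ptc s + ptd s := funext hsplit
  have hdpt' : dpt = dptc + dptd := by
    refine hdpt.unique ?_
    rw [hptfun]; exact hdptc.add hdptd
  -- compute D
  have hf : HasDerivAt (fun s => p s - ptc s) (dp - dptc) t := hdp.sub hdptc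
  have hDval : D = 2 * ⟪dp - dptc, p t - ptc t⟫ := by
    have h1 : HasDerivAt (fun s => ⟪(p s - ptc s : H), p s - ptc s⟫)
        (⟪p t - ptc t, dp - dptc⟫ + ⟪dp - dptc, p t - ptc t⟫) t := hf.inner ℝ hf
    have h2 : HasDerivAt (fun s => ‖p s - ptc s‖ ^ 2)
        (⟪p t - ptc t, dp - dptc⟫ + ⟪dp - dptc, p t - ptc t⟫) t := by
      simpa only [real_inner_self_eq_norm_sq] using h1
    have := hD.unique h2
    rw [this, real_inner_comm (p t - ptc t) (dp - dptc)]; ring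
  -- error identity tested with eᶜ
  have hid : ⟪dp - dpt, p t - ptc t⟫ + b ρ (p t - ptc t) = 0 := herr _ heQ
  have hX : ⟪dptd, ρ⟫ ≤ dnorm dptd * en ρ := hdnorm _ _ hρQ
  have hY : ⟪dptd, ε⟫ ≤ dnorm dptd * en ε := hdnorm _ _ hεQ
  have hB : |b ρ ε| ≤ Cb * en ρ * en ε := hCb _ hρQ _ hεQ
  have hB' : -(Cb * en ρ * en ε) ≤ b ρ ε := neg_le_of_abs_le hB
  have hr : en ρ ^ 2 = b ρ ρ := hen _ hρQ
  have hdecomp : ⟪dp - dptc, p t - ptc t⟫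
      = ⟪dp - dpt, p t - ptc t⟫ + ⟪dptd, ρ⟫ + ⟪dptd, ε⟫ := by
    rw [hdpt', he]
    simp [inner_sub_left, inner_add_right, inner_add_left]
    ring
  have hbexp : b ρ (p t - ptc t) = b ρ ρ + b ρ ε := by
    rw [he, map_add]
  have ha := hdnorm_nonneg dptd
  nlinarith [sq_nonneg (2 * dnorm dptd - en ρ), sq_nonneg (dnorm dptd - en ε),
    sq_nonneg (en ρ - 2 * Cb * en ε), hen_nonneg ρ, hen_nonneg ε]
end

section
/- With the modified error identity ⟨∂ₜe(t), q⟩ + b(ρ(t), q) = (−R_T[p̃](t), q)_H for all q ∈ Q, testing with eᶜ(t) and applying Young's inequality yields ∂ₜ‖eᶜ(t)‖² + |||ρ(t)|||² ≤ 4|||∂ₜp̃ᵈ(t)|||²_{Q,−1} + (3|||b|||² + 2)|||εᶜ(t)|||² + 4(C^b_{H,Q})²‖R_T[p̃](t)‖²_H. -/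
open RealInnerProductSpace

/-- Pointwise differential inequality in the fully discrete case:
testing the modified error identity with `eᶜ(t)` and Young's inequality gives
`∂ₜ‖eᶜ(t)‖² + |||ρ(t)|||² ≤ 4|||∂ₜp̃ᵈ(t)|||²_{Q,-1} + (3|||b|||² + 2)|||εᶜ(t)|||²
  + 4 (C^b_{H,Q})² ‖R_T[p̃](t)‖²`. -/
theorem differential_inequality_fully_discrete
    {H : Type*} [NormedAddCommGroup H] [InnerProductSpace ℝ H]
    (Q Qt : Submodule ℝ H)
    (b : H →ₗ[ℝ] H →ₗ[ℝ] ℝ)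
    (en : H → ℝ) (hen_nonneg : ∀ v, 0 ≤ en v)
    (hen : ∀ q ∈ Q, en q ^ 2 = b q q)
    (Cb : ℝ) (hCb : ∀ p ∈ Q, ∀ q ∈ Q, |b p q| ≤ Cb * en p * en q)
    (dnorm : H → ℝ) (hdnorm_nonneg : ∀ g, 0 ≤ dnorm g)
    (hdnorm : ∀ g : H, ∀ q ∈ Q, ⟪g, q⟫ ≤ dnorm g * en q)
    (CHQ : ℝ) (hCHQ : ∀ q ∈ Q, ‖q‖ ≤ CHQ * en q)
    (E : H → H) (hEmem : ∀ qr ∈ Qt, E qr ∈ Q)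
    (p pt ptc ptd : ℝ → H)
    (hpQ : ∀ t, p t ∈ Q) (hptQt : ∀ t, pt t ∈ Qt) (hptcQ : ∀ t, ptc t ∈ Q)
    (hsplit : ∀ t, pt t = ptc t + ptd t)
    (t : ℝ) (dp dpt dptc dptd RTt : H)
    (hdp : HasDerivAt p dp t) (hdpt : HasDerivAt pt dpt t)
    (hdptc : HasDerivAt ptc dptc t) (hdptd : HasDerivAt ptd dptd t)
    (hRTt : RTt ∈ Qt)
    (D : ℝ) (hD : HasDerivAt (fun s => ‖p s - ptc s‖ ^ 2) D t)
    -- modified error identity at `t`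
    (herr : ∀ q ∈ Q, ⟪dp - dpt, q⟫ + b (p t - E (pt t)) q = ⟪-RTt, q⟫) :
    D + en (p t - E (pt t)) ^ 2
      ≤ 4 * dnorm dptd ^ 2 + (3 * Cb ^ 2 + 2) * en (E (pt t) - ptc t) ^ 2
        + 4 * CHQ ^ 2 * ‖RTt‖ ^ 2 := by
  set e : H := p t - ptc t with he_def
  set ρ : H := p t - E (pt t) with hρ_def
  set ε : H := E (pt t) - ptc t with hε_def
  have heQ : e ∈ Q := Q.sub_mem (hpQ t) (hptcQ t)
  have hρQ : ρ ∈ Q := Q.sub_mem (hpQ t) (hEmem _ (hptQt t))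
  have hεQ : ε ∈ Q := Q.sub_mem (hEmem _ (hptQt t)) (hptcQ t)
  have hesplit : e = ρ + ε := by rw [he_def, hρ_def, hε_def]; abel
  -- derivative of ptd
  have hfun : ptd = fun s => pt s - ptc s := funext fun s => by rw [hsplit s]; abel
  have hdptd' : dptd = dpt - dptc := by
    refine hdptd.unique ?_
    rw [hfun]; exact hdpt.sub hdptc
  -- derivative of the squared norm
  have hDinner : HasDerivAt (fun s => ⟪p s - ptc s, p s - ptc s⟫)
      (⟪e, dp - dptc⟫ + ⟪dp - dptc, e⟫) t := (hdp.sub hdptc).inner ℝ (hdp.sub hdptc)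
  have hDval : D = 2 * ⟪dp - dptc, e⟫ := by
    have heq : (fun s : ℝ => ‖p s - ptc s‖ ^ 2)
        = fun s => ⟪p s - ptc s, p s - ptc s⟫ := funext fun s =>
      (real_inner_self_eq_norm_sq _).symm
    have := hD.unique (heq ▸ hDinner)
    rw [this, real_inner_comm e (dp - dptc)]; ring
  -- split the inner products
  have hsplit1 : dp - dptc = (dp - dpt) + dptd := by rw [hdptd']; abel
  have hinnersplit : ⟪dp - dptc, e⟫ = ⟪dp - dpt, e⟫ + ⟪dptd, e⟫ := by
    rw [hsplit1, inner_add_left]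
  have herre := herr e heQ
  have hbe : (b ρ) e = en ρ ^ 2 + b ρ ε := by
    rw [hesplit, map_add, hen ρ hρQ]
  have hdsplit : ⟪dptd, e⟫ = ⟪dptd, ρ⟫ + ⟪dptd, ε⟫ := by
    rw [hesplit, inner_add_right]
  have hRsplit : ⟪-RTt, e⟫ = ⟪-RTt, ρ⟫ + ⟪-RTt, ε⟫ := by
    rw [hesplit, inner_add_right]
  -- bounds on each term
  have hRρ : ⟪-RTt, ρ⟫ ≤ ‖RTt‖ * (CHQ * en ρ) := by
    calc ⟪-RTt, ρ⟫ ≤ ‖-RTt‖ * ‖ρ‖ := real_inner_le_norm _ _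
    _ = ‖RTt‖ * ‖ρ‖ := by rw [norm_neg]
    _ ≤ ‖RTt‖ * (CHQ * en ρ) :=
      mul_le_mul_of_nonneg_left (hCHQ ρ hρQ) (norm_nonneg _)
  have hRε : ⟪-RTt, ε⟫ ≤ ‖RTt‖ * (CHQ * en ε) := by
    calc ⟪-RTt, ε⟫ ≤ ‖-RTt‖ * ‖ε‖ := real_inner_le_norm _ _
    _ = ‖RTt‖ * ‖ε‖ := by rw [norm_neg]
    _ ≤ ‖RTt‖ * (CHQ * en ε) :=
      mul_le_mul_of_nonneg_left (hCHQ ε hεQ) (norm_nonneg _)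
  have hdρ : ⟪dptd, ρ⟫ ≤ dnorm dptd * en ρ := hdnorm dptd ρ hρQ
  have hdε : ⟪dptd, ε⟫ ≤ dnorm dptd * en ε := hdnorm dptd ε hεQ
  have hbρε : -(b ρ ε) ≤ Cb * en ρ * en ε := by
    have := hCb ρ hρQ ε hεQ
    have := neg_abs_le ((b ρ) ε)
    linarith
  have h1 : 0 ≤ en ρ := hen_nonneg ρ
  have h2 : 0 ≤ en ε := hen_nonneg ε
  have h3 : 0 ≤ dnorm dptd := hdnorm_nonneg dptd
  have h4 : (0:ℝ) ≤ ‖RTt‖ := norm_nonneg _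
  have h5 : ‖ρ‖ ≤ CHQ * en ρ := hCHQ ρ hρQ
  have h6 : (0:ℝ) ≤ ‖ρ‖ := norm_nonneg _
  -- assemble with Young's inequality
  nlinarith [sq_nonneg (3 * (CHQ * ‖RTt‖) - en ρ), sq_nonneg (CHQ * ‖RTt‖ - en ε),
    sq_nonneg (3 * Cb * en ε - en ρ), sq_nonneg (3 * dnorm dptd - en ρ),
    sq_nonneg (dnorm dptd - en ε), herre, hDval, hinnersplit, hbe, hdsplit, hRsplit]
end
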